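/- arXiv:math/0509205 — 2 statements merged into one kernel-verified Lean document; each statement's English description precedes it below -/
import Mathlib

section
/- For every integer n ≥ 1, S_1(n) = (5/12)·σ_3(n) − (n/2)·σ_1(n) + (1/12)·σ_1(n). -/
/-- Divisor-power sum: `sigma' k x = ∑_{d ∣ x} d^k` for positive `x`, and `0` otherwise. -/
def sigma' (k x : ℕ) : ℕ := ∑ d ∈ x.divisors, d ^ k

/-- `Spair k n = ∑_{(a,b) ∈ ℤ_{>0}², k·a + b = n} σ₁(a)·σ₁(b)`. -/
def Spair (k n : ℕ) : ℕ :=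
  ∑ p ∈ ((Finset.Ioc 0 n) ×ˢ (Finset.Ioc 0 n)).filter (fun p => k * p.1 + p.2 = n),
    sigma' 1 p.1 * sigma' 1 p.2

/-!
Expanding both divisor sums, `S₁(n) = ∑ a b` over the quadruples of positive integers with
`a x + b y = n`. Liouville's method maps the regions `x < y` and `y < x` of this set onto the region
`b < a` by `(a, x, b, y) ↦ (a + b, x, b, y - x)` and `(a, x, b, y) ↦ (a + b, y, a, x - y)`, and the
region `a < b` onto it by swapping the pairs. For `P(a, b) = a² + ab + b²` and
`Q(a, b) = a² - ab + b²` one has `P(a - b, b) = P(b, a - b) = Q(a, b) = Q(b, a)`, so in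
`∑ (P - Q)(a, b) = 2 ∑ a b` only the diagonals `x = y` and `a = b` survive; they contribute
`∑_{s ∣ n} ∑_{0 < a < s} P(a, s - a)` and `∑_{s ∣ n} (n / s - 1) s²`.
-/

open Finset

theorem Finset.sum_filter_lt_add_sum_filter_gt_add_sum_filter_eq {ι β M : Type*}
    [AddCommMonoid M] [LinearOrder β] (s : Finset ι) (f g : ι → β) (F : ι → M) :
    ∑ i ∈ s with f i < g i, F i + ∑ i ∈ s with g i < f i, F i + ∑ i ∈ s with f i = g i, F i =
      ∑ i ∈ s, F i := by
  simp only [sum_filter, ← sum_add_distrib]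
  refine sum_congr rfl fun i _ => ?_
  rcases lt_trichotomy (f i) (g i) with h | h | h
  · simp [h, h.not_gt, h.ne]
  · simp [h]
  · simp [h, h.not_gt, h.ne']

section GaussSums
variable {K : Type*} [Field K] [CharZero K]

theorem sum_range_cast_id (s : ℕ) : ∑ a ∈ range s, (a : K) = s * (s - 1) / 2 := by
  induction s with
  | zero => simp
  | succ m ih => rw [sum_range_succ, ih]; push_cast; ring

theorem sum_range_cast_sq (s : ℕ) :
    ∑ a ∈ range s, (a : K) ^ 2 = s * (s - 1) * (2 * s - 1) / 6 := by
  induction s with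
  | zero => simp
  | succ m ih => rw [sum_range_succ, ih]; push_cast; ring

theorem sum_Ioo_sq_add_mul_add_sq (s : ℕ) :
    ∑ a ∈ Ioo 0 s, ((a : K) ^ 2 + a * (s - a : ℕ) + ((s - a : ℕ) : K) ^ 2) =
      (5 * s ^ 3 - 6 * s ^ 2 + s) / 6 := by
  obtain rfl | hs := s.eq_zero_or_pos
  · simp
  calc _ = ∑ a ∈ range s, ((a : K) ^ 2 + a * (s - a : ℕ) + ((s - a : ℕ) : K) ^ 2) - s ^ 2 := by
        rw [range_eq_Ico, ← Ioo_insert_left hs, sum_insert (by simp)]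
        simp only [Nat.cast_zero, Nat.sub_zero]
        ring
    _ = ∑ a ∈ range s, ((s : K) ^ 2 - s * a + (a : K) ^ 2) - s ^ 2 := by
        congr 1
        exact sum_congr rfl fun a ha => by rw [Nat.cast_sub (mem_range.1 ha).le]; ring
    _ = _ := by
        rw [sum_add_distrib, sum_sub_distrib, sum_const, card_range, nsmul_eq_mul, ← mul_sum,
          sum_range_cast_id, sum_range_cast_sq]
        ring

end GaussSums

theorem cast_sigma' {R : Type*} [CommSemiring R] (k n : ℕ) :
    (sigma' k n : R) = ∑ d ∈ n.divisors, (d : R) ^ k := by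
  simp [sigma']

theorem sigma'_one_eq_sum_divisorsAntidiagonal (m : ℕ) :
    sigma' 1 m = ∑ d ∈ m.divisorsAntidiagonal, d.1 := by
  simp [sigma', Nat.sum_divisorsAntidiagonal fun a _ => a]

def addMulQuads (n : ℕ) : Finset ((ℕ × ℕ) × (ℕ × ℕ)) :=
  ((Ioc 0 n ×ˢ Ioc 0 n) ×ˢ (Ioc 0 n ×ˢ Ioc 0 n)).filter
    fun q => q.1.1 * q.1.2 + q.2.1 * q.2.2 = n

@[simp]
theorem mem_addMulQuads {n a x b y : ℕ} :
    ((a, x), (b, y)) ∈ addMulQuads n ↔ 0 < a ∧ 0 < x ∧ 0 < b ∧ 0 < y ∧ a * x + b * y = n := by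
  simp only [addMulQuads, mem_filter, mem_product, mem_Ioc]
  constructor
  · rintro ⟨⟨⟨⟨ha, -⟩, hx, -⟩, ⟨hb, -⟩, hy, -⟩, h⟩
    exact ⟨ha, hx, hb, hy, h⟩
  · rintro ⟨ha, hx, hb, hy, rfl⟩
    refine ⟨⟨⟨⟨ha, ?_⟩, hx, ?_⟩, ⟨hb, ?_⟩, hy, ?_⟩, rfl⟩ <;> nlinarith

theorem swap_mem_addMulQuads {n : ℕ} {q : (ℕ × ℕ) × (ℕ × ℕ)} (hq : q ∈ addMulQuads n) :
    q.swap ∈ addMulQuads n := by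
  obtain ⟨⟨a, x⟩, b, y⟩ := q
  simp only [Prod.swap_prod_mk, mem_addMulQuads] at hq ⊢
  obtain ⟨ha, hx, hb, hy, he⟩ := hq
  exact ⟨hb, hy, ha, hx, by rw [← he, add_comm]⟩

theorem Spair_one_eq_sum_addMulQuads (n : ℕ) :
    Spair 1 n = ∑ q ∈ addMulQuads n, q.1.1 * q.2.1 := by
  rw [Spair, ← sum_fiberwise_of_maps_to
    (g := fun q : (ℕ × ℕ) × (ℕ × ℕ) => (q.1.1 * q.1.2, q.2.1 * q.2.2))
    (t := (Ioc 0 n ×ˢ Ioc 0 n).filter fun p => 1 * p.1 + p.2 = n)]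
  · refine sum_congr rfl fun ⟨m, k⟩ hp => ?_
    rw [sigma'_one_eq_sum_divisorsAntidiagonal, sigma'_one_eq_sum_divisorsAntidiagonal,
      sum_mul_sum, ← sum_product']
    refine sum_congr ?_ fun _ _ => rfl
    simp only [mem_filter, mem_product, mem_Ioc] at hp
    ext ⟨⟨a, x⟩, b, y⟩
    simp only [mem_product, Nat.mem_divisorsAntidiagonal, mem_filter, mem_addMulQuads,
      Prod.ext_iff]
    constructor
    · rintro ⟨⟨rfl, h1⟩, rfl, h2⟩
      simp only [mul_ne_zero_iff, ← Nat.pos_iff_ne_zero] at h1 h2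
      exact ⟨⟨h1.1, h1.2, h2.1, h2.2, by omega⟩, rfl, rfl⟩
    · rintro ⟨⟨ha, hx, hb, hy, -⟩, h1, h2⟩
      exact ⟨⟨h1, by omega⟩, h2, by omega⟩
  · rintro ⟨⟨a, x⟩, b, y⟩ h
    simp only [mem_addMulQuads] at h
    obtain ⟨ha, hx, hb, hy, rfl⟩ := h
    simp only [mem_filter, mem_product, mem_Ioc]
    refine ⟨⟨⟨?_, ?_⟩, ?_, ?_⟩, ?_⟩ <;> first | positivity | omega

section Liouville
variable {M : Type*} [AddCommMonoid M] (n : ℕ) (F : ℕ → ℕ → M)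

theorem sum_addMulQuads_x_lt_y :
    ∑ q ∈ addMulQuads n with q.1.2 < q.2.2, F q.1.1 q.2.1 =
      ∑ q ∈ addMulQuads n with q.2.1 < q.1.1, F (q.1.1 - q.2.1) q.2.1 := by
  refine sum_nbij' (fun q => ((q.1.1 + q.2.1, q.1.2), (q.2.1, q.2.2 - q.1.2)))
    (fun q => ((q.1.1 - q.2.1, q.1.2), (q.2.1, q.1.2 + q.2.2))) ?_ ?_ ?_ ?_ ?_ <;>
    rintro ⟨⟨a, x⟩, b, y⟩ h <;> simp only [mem_filter, mem_addMulQuads] at h ⊢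
  · obtain ⟨⟨ha, hx, hb, hy, he⟩, hxy⟩ := h
    refine ⟨⟨by omega, hx, hb, by omega, ?_⟩, by omega⟩
    zify [hxy.le] at he ⊢
    linear_combination he
  · obtain ⟨⟨ha, hx, hb, hy, he⟩, hba⟩ := h
    refine ⟨⟨by omega, hx, hb, by omega, ?_⟩, by omega⟩
    zify [hba.le] at he ⊢
    linear_combination he
  · simp only [Prod.mk.injEq, and_true, true_and]; omega
  · simp only [Prod.mk.injEq, and_true, true_and]; omega
  · rw [add_tsub_cancel_right]

theorem sum_addMulQuads_y_lt_x :
    ∑ q ∈ addMulQuads n with q.2.2 < q.1.2, F q.1.1 q.2.1 =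
      ∑ q ∈ addMulQuads n with q.2.1 < q.1.1, F q.2.1 (q.1.1 - q.2.1) := by
  refine sum_nbij' (fun q => ((q.1.1 + q.2.1, q.2.2), (q.1.1, q.1.2 - q.2.2)))
    (fun q => ((q.2.1, q.1.2 + q.2.2), (q.1.1 - q.2.1, q.1.2))) ?_ ?_ ?_ ?_ ?_ <;>
    rintro ⟨⟨a, x⟩, b, y⟩ h <;> simp only [mem_filter, mem_addMulQuads] at h ⊢
  · obtain ⟨⟨ha, hx, hb, hy, he⟩, hyx⟩ := h
    refine ⟨⟨by omega, hy, ha, by omega, ?_⟩, by omega⟩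
    zify [hyx.le] at he ⊢
    linear_combination he
  · obtain ⟨⟨ha, hx, hb, hy, he⟩, hba⟩ := h
    refine ⟨⟨hb, by omega, by omega, hx, ?_⟩, by omega⟩
    zify [hba.le] at he ⊢
    linear_combination he
  · simp only [Prod.mk.injEq, and_true, true_and]; omega
  · simp only [Prod.mk.injEq, and_true, true_and]; omega
  · rw [add_tsub_cancel_left]

theorem sum_addMulQuads_x_eq_y :
    ∑ q ∈ addMulQuads n with q.1.2 = q.2.2, F q.1.1 q.2.1 =
      ∑ s ∈ n.divisors, ∑ a ∈ Ioo 0 s, F a (s - a) := by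
  rw [sum_sigma']
  refine sum_nbij' (fun q => ⟨q.1.1 + q.2.1, q.1.1⟩)
    (fun p => ((p.2, n / p.1), (p.1 - p.2, n / p.1))) ?_ ?_ ?_ ?_ ?_
  · rintro ⟨⟨a, x⟩, b, y⟩ h
    simp only [mem_filter, mem_addMulQuads] at h
    obtain ⟨⟨ha, hx, hb, -, rfl⟩, rfl⟩ := h
    simp only [mem_sigma, Nat.mem_divisors, mem_Ioo]
    exact ⟨⟨⟨x, by ring⟩, by positivity⟩, ha, by omega⟩
  · rintro ⟨s, a⟩ h
    simp only [mem_sigma, Nat.mem_divisors, mem_Ioo] at h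
    obtain ⟨⟨⟨m, rfl⟩, hn⟩, ha, has⟩ := h
    rw [Nat.mul_div_cancel_left m (by omega)]
    simp only [mem_filter, mem_addMulQuads]
    refine ⟨⟨ha, Nat.pos_of_ne_zero (right_ne_zero_of_mul hn), by omega,
      Nat.pos_of_ne_zero (right_ne_zero_of_mul hn), ?_⟩, trivial⟩
    rw [← add_mul, Nat.add_sub_cancel' has.le]
  · rintro ⟨⟨a, x⟩, b, y⟩ h
    simp only [mem_filter, mem_addMulQuads] at h
    obtain ⟨⟨ha, -, -, -, rfl⟩, rfl⟩ := h
    rw [← add_mul, Nat.mul_div_cancel_left x (by omega), add_tsub_cancel_left]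
  · rintro ⟨s, a⟩ h
    simp only [mem_sigma, mem_Ioo] at h
    simp only [Nat.add_sub_cancel' h.2.2.le]
  · intro q _
    simp only [add_tsub_cancel_left]

theorem sum_addMulQuads_a_eq_b (g : ℕ → M) :
    ∑ q ∈ addMulQuads n with q.1.1 = q.2.1, g q.1.1 =
      ∑ s ∈ n.divisors, (n / s - 1) • g s := by
  have hcard : ∀ s ∈ n.divisors, (n / s - 1) • g s = ∑ _x ∈ Ioo 0 (n / s), g s := by
    intro s _
    rw [sum_const, Nat.card_Ioo, Nat.sub_zero]
  rw [sum_congr rfl hcard, sum_sigma']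
  refine sum_nbij' (fun q => ⟨q.1.1, q.1.2⟩)
    (fun p => ((p.1, p.2), (p.1, n / p.1 - p.2))) ?_ ?_ ?_ ?_ ?_
  · rintro ⟨⟨a, x⟩, b, y⟩ h
    simp only [mem_filter, mem_addMulQuads] at h
    obtain ⟨⟨ha, hx, -, hy, rfl⟩, rfl⟩ := h
    simp only [mem_sigma, Nat.mem_divisors, mem_Ioo, ← mul_add, Nat.mul_div_cancel_left _ ha]
    exact ⟨⟨dvd_mul_right a _, by positivity⟩, hx, by omega⟩
  · rintro ⟨s, x⟩ h
    simp only [mem_sigma, Nat.mem_divisors, mem_Ioo] at h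
    obtain ⟨⟨⟨m, rfl⟩, hn⟩, hx, hxm⟩ := h
    have hs : 0 < s := Nat.pos_of_ne_zero (left_ne_zero_of_mul hn)
    rw [Nat.mul_div_cancel_left m hs] at hxm ⊢
    simp only [mem_filter, mem_addMulQuads]
    refine ⟨⟨hs, hx, hs, by omega, ?_⟩, trivial⟩
    rw [← mul_add, Nat.add_sub_cancel' hxm.le]
  · rintro ⟨⟨a, x⟩, b, y⟩ h
    simp only [mem_filter, mem_addMulQuads] at h
    obtain ⟨⟨ha, -, -, -, rfl⟩, rfl⟩ := h
    rw [← mul_add, Nat.mul_div_cancel_left _ ha, add_tsub_cancel_left]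
  · intro p _
    rfl
  · intro q _
    rfl

theorem sum_addMulQuads_split_xy :
    ∑ q ∈ addMulQuads n, F q.1.1 q.2.1 =
      ∑ q ∈ addMulQuads n with q.2.1 < q.1.1,
          (F (q.1.1 - q.2.1) q.2.1 + F q.2.1 (q.1.1 - q.2.1)) +
        ∑ s ∈ n.divisors, ∑ a ∈ Ioo 0 s, F a (s - a) := by
  rw [← sum_filter_lt_add_sum_filter_gt_add_sum_filter_eq _ (fun q => q.1.2) (fun q => q.2.2),
    sum_addMulQuads_x_lt_y, sum_addMulQuads_y_lt_x, sum_addMulQuads_x_eq_y, sum_add_distrib]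

theorem sum_addMulQuads_split_ab :
    ∑ q ∈ addMulQuads n, F q.1.1 q.2.1 =
      ∑ q ∈ addMulQuads n with q.2.1 < q.1.1, (F q.1.1 q.2.1 + F q.2.1 q.1.1) +
        ∑ s ∈ n.divisors, (n / s - 1) • F s s := by
  have hswap : ∑ q ∈ addMulQuads n with q.1.1 < q.2.1, F q.1.1 q.2.1 =
      ∑ q ∈ addMulQuads n with q.2.1 < q.1.1, F q.2.1 q.1.1 := by
    refine sum_nbij' Prod.swap Prod.swap ?_ ?_ (fun _ _ => rfl) (fun _ _ => rfl)
      fun _ _ => rfl <;>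
      exact fun q hq => mem_filter.2 ⟨swap_mem_addMulQuads (mem_filter.1 hq).1, (mem_filter.1 hq).2⟩
  have hdiag : ∑ q ∈ addMulQuads n with q.1.1 = q.2.1, F q.1.1 q.2.1 =
      ∑ q ∈ addMulQuads n with q.1.1 = q.2.1, F q.1.1 q.1.1 :=
    sum_congr rfl fun q hq => by rw [(mem_filter.1 hq).2]
  rw [← sum_filter_lt_add_sum_filter_gt_add_sum_filter_eq _ (fun q => q.1.1) (fun q => q.2.1),
    hswap, hdiag, sum_addMulQuads_a_eq_b n fun s => F s s, sum_add_distrib]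
  abel

end Liouville

theorem sum_addMulQuads_sub_sum_addMulQuads {M : Type*} [AddCommGroup M] (n : ℕ)
    (F G : ℕ → ℕ → M) (hFG : ∀ a b, b < a → F (a - b) b + F b (a - b) = G a b + G b a) :
    ∑ q ∈ addMulQuads n, F q.1.1 q.2.1 - ∑ q ∈ addMulQuads n, G q.1.1 q.2.1 =
      ∑ s ∈ n.divisors, ∑ a ∈ Ioo 0 s, F a (s - a) - ∑ s ∈ n.divisors, (n / s - 1) • G s s := by
  rw [sum_addMulQuads_split_xy, sum_addMulQuads_split_ab,
    sum_congr rfl fun q hq => hFG q.1.1 q.2.1 (mem_filter.1 hq).2]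
  abel

theorem stmt0_general (n : ℕ) :
    (Spair 1 n : ℚ) =
      (5 / 12) * (sigma' 3 n : ℚ) - ((n : ℚ) / 2) * (sigma' 1 n : ℚ)
        + (1 / 12) * (sigma' 1 n : ℚ) := by
  have key := sum_addMulQuads_sub_sum_addMulQuads n
    (fun a b => (a : ℚ) ^ 2 + a * b + b ^ 2) (fun a b => (a : ℚ) ^ 2 - a * b + b ^ 2)
    fun a b hba => by push_cast [hba.le]; ring
  simp only [← sum_sub_distrib, nsmul_eq_mul, sum_Ioo_sq_add_mul_add_sq] at key
  have hdiag : ∀ s ∈ n.divisors,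
      ((n / s - 1 : ℕ) : ℚ) * ((s : ℚ) ^ 2 - s * s + s ^ 2) = n * s - s ^ 2 := by
    intro s hs
    obtain ⟨⟨m, rfl⟩, hn⟩ := Nat.mem_divisors.1 hs
    rw [Nat.mul_div_cancel_left m (Nat.pos_of_ne_zero (left_ne_zero_of_mul hn))]
    push_cast [Nat.one_le_iff_ne_zero.2 (right_ne_zero_of_mul hn)]
    ring
  calc (Spair 1 n : ℚ)
      = 1 / 2 * ∑ q ∈ addMulQuads n, ((q.1.1 : ℚ) ^ 2 + q.1.1 * q.2.1 + (q.2.1 : ℚ) ^ 2 -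
          ((q.1.1 : ℚ) ^ 2 - q.1.1 * q.2.1 + (q.2.1 : ℚ) ^ 2)) := by
        rw [Spair_one_eq_sum_addMulQuads, Nat.cast_sum, mul_sum]
        exact sum_congr rfl fun q _ => by push_cast; ring
    _ = 1 / 2 * ∑ s ∈ n.divisors, ((5 * (s : ℚ) ^ 3 + s) / 6 - n * s) := by
        rw [key]
        exact congrArg _ (sum_congr rfl fun s hs => by rw [hdiag s hs]; ring)
    _ = _ := by
        simp only [cast_sigma', mul_sum, ← sum_add_distrib, ← sum_sub_distrib]
        exact sum_congr rfl fun s _ => by ring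

theorem stmt0 (n : ℕ) (hn : 1 ≤ n) :
    (Spair 1 n : ℚ) =
      (5 / 12) * (sigma' 3 n : ℚ) - ((n : ℚ) / 2) * (sigma' 1 n : ℚ)
        + (1 / 12) * (sigma' 1 n : ℚ) :=
  stmt0_general n
end

section
/- Let n ≥ 1 be an odd integer. For each positive divisor r of n let α_1(n,r) = Σ u_1·u_2, the sum ranging over quadruples (h_1, u_1, h_2, u_2) of positive integers with gcd(h_1, h_2) = 1, h_1 and h_2 both odd, u_1 < u_2 and h_1·u_1 + h_2·u_2 = n/r. Then Σ_{r ∣ n} r·μ(r)·α_1(n,r) = (n²(n − 1)/8)·Σ_{r ∣ n} μ(r)/r². -/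
/-- Quadruples `(h₁, u₁, h₂, u₂)` of positive integers bounded by `m`. -/
def quadBox (m : ℕ) : Finset (ℕ × ℕ × ℕ × ℕ) :=
  Finset.Ioc 0 m ×ˢ Finset.Ioc 0 m ×ˢ Finset.Ioc 0 m ×ˢ Finset.Ioc 0 m

/-- `alpha1 m = ∑ u₁·u₂` over quadruples `(h₁,u₁,h₂,u₂)` of positive integers with
`gcd(h₁,h₂) = 1`, `h₁` and `h₂` odd, `u₁ < u₂` and `h₁·u₁ + h₂·u₂ = m`. -/
def alpha1 (m : ℕ) : ℕ :=
  ∑ p ∈ (quadBox m).filter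
      (fun p => Nat.gcd p.1 p.2.2.1 = 1 ∧ Odd p.1 ∧ Odd p.2.2.1 ∧
        p.2.1 < p.2.2.2 ∧ p.1 * p.2.1 + p.2.2.1 * p.2.2.2 = m),
    p.2.1 * p.2.2.2

/-!
Writing `α(m)` for the same sum without the coprimality condition, grouping the quadruples of
`α(m)` by `d = gcd(h₁, h₂)` gives `α = ζ * α₁` on odd numbers. For odd `m`, Liouville's
elementary method evaluates `8 α(m) = σ₃(m) - m σ₁(m)`: write `4 u₁u₂ = (u₁+u₂)² - (u₁-u₂)²` and
move both sums, by linear changes of variables such as `(h₁, u₁, h₂, u₂) ↦ (h₁+h₂, u₂, h₁, u₁-u₂)`,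
onto solutions of `E u + O c = m` with `E` even and `O` odd, where they cancel up to divisor sums.
The theorem is then an identity of Dirichlet convolutions: with `ν(r) = r μ(r)`, both sides are
`(ν * μ * (σ₃ - id·σ₁))(n) / 8`.
-/

open Finset
open ArithmeticFunction
open scoped ArithmeticFunction.sigma ArithmeticFunction.Moebius ArithmeticFunction.zeta

lemma Finset.sum_eq_sum_filter_lt_add_sum_filter_eq_add_sum_filter_gt {ι β M : Type*}
    [LinearOrder β] [AddCommMonoid M] (s : Finset ι) (g h : ι → β) (f : ι → M) :
    ∑ i ∈ s, f i = ∑ i ∈ s.filter (fun i => g i < h i), f i +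
      ∑ i ∈ s.filter (fun i => g i = h i), f i + ∑ i ∈ s.filter (fun i => h i < g i), f i := by
  rw [← sum_filter_add_sum_filter_not s (fun i => g i < h i),
    ← sum_filter_add_sum_filter_not (s.filter fun i => ¬g i < h i) (fun i => g i = h i),
    filter_filter, filter_filter, add_assoc]
  congr 3 <;> exact filter_congr fun i _ => by grind

namespace ArithmeticFunction

lemma pmul_mul_of_map_mul {R : Type*} [CommSemiring R]
    {c : ArithmeticFunction R} (hc : ∀ a b, c (a * b) = c a * c b) (f g : ArithmeticFunction R) :
    c.pmul (f * g) = c.pmul f * c.pmul g := by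
  ext n
  simp only [pmul_apply, mul_apply, mul_sum]
  refine sum_congr rfl fun x hx => ?_
  rw [← (Nat.mem_divisorsAntidiagonal.mp hx).1, hc]
  ring

lemma sub_apply {R : Type*} [AddGroup R] {f g : ArithmeticFunction R} {n : ℕ} :
    (f - g) n = f n - g n := by
  rw [sub_eq_add_neg, add_apply, neg_apply, sub_eq_add_neg]

lemma mul_apply_eq_sum_divisors {R : Type*} [Semiring R] (f g : ArithmeticFunction R) (n : ℕ) :
    (f * g) n = ∑ d ∈ n.divisors, f d * g (n / d) := by
  rw [mul_apply, Nat.sum_divisorsAntidiagonal (f · * g ·)]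

lemma mul_apply_congr_right {R : Type*} [Semiring R]
    {f g g' : ArithmeticFunction R} {n : ℕ} (h : ∀ d ∈ n.divisors, g d = g' d) :
    (f * g) n = (f * g') n := by
  simp only [mul_apply]
  exact sum_congr rfl fun x hx => by rw [h x.2 (Nat.snd_mem_divisors_of_mem_antidiagonal hx)]

lemma pmul_one {R : Type*} [MonoidWithZero R] {c : ArithmeticFunction R} (hc : c 1 = 1) :
    c.pmul 1 = 1 := by
  ext n
  by_cases hn : n = 1 <;> simp [hn, hc]

lemma id_pmul_sigma_one :
    (ArithmeticFunction.id : ArithmeticFunction ℕ).pmul (σ 1) = ArithmeticFunction.id * pow 2 := by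
  have hsq : (ArithmeticFunction.id : ArithmeticFunction ℕ).pmul ArithmeticFunction.id = pow 2 := by
    ext n; simp [pow_apply, sq]
  rw [← zeta_mul_pow_eq_sigma, pow_one_eq_id, pmul_mul_of_map_mul (fun _ _ => rfl),
    ← natCoe_nat ζ, pmul_zeta, hsq]

lemma id_pmul_moebius_mul_id {R : Type*} [CommRing R] :
    (ArithmeticFunction.id : ArithmeticFunction R).pmul μ *
      (ArithmeticFunction.id : ArithmeticFunction R) = 1 := by
  set ι : ArithmeticFunction R := ↑ArithmeticFunction.id
  have hid : ∀ a b, ι (a * b) = ι a * ι b := by simp [ι]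
  conv_lhs => enter [2]; rw [← pmul_zeta ι]
  rw [← pmul_mul_of_map_mul hid, coe_moebius_mul_coe_zeta, pmul_one (by simp [ι])]

lemma id_pmul_moebius_mul_moebius_mul_sigma_sub {R : Type*} [CommRing R] :
    ((ArithmeticFunction.id : ArithmeticFunction R).pmul μ) * μ *
        (↑(σ 3) - ↑((ArithmeticFunction.id : ArithmeticFunction ℕ).pmul (σ 1))) =
      (ArithmeticFunction.id : ArithmeticFunction R).pmul μ * ↑(pow 3) - μ * ↑(pow 2) := by
  rw [← zeta_mul_pow_eq_sigma, id_pmul_sigma_one, natCoe_mul, natCoe_mul]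
  linear_combination
    (ArithmeticFunction.id : ArithmeticFunction R).pmul μ * ↑(pow 3) *
        coe_moebius_mul_coe_zeta (R := R) -
      (μ * ↑(pow 2) : ArithmeticFunction R) * id_pmul_moebius_mul_id (R := R)

lemma id_pmul_moebius_mul_pow_sub_apply {K : Type*} [Field K] [CharZero K] (n : ℕ) :
    ((ArithmeticFunction.id : ArithmeticFunction K).pmul μ * ↑(pow 3) - μ * ↑(pow 2)) n =
      (n : K) ^ 2 * ((n : K) - 1) * ∑ r ∈ n.divisors, (μ r : K) / (r : K) ^ 2 := by
  rw [ArithmeticFunction.sub_apply, mul_apply_eq_sum_divisors, mul_apply_eq_sum_divisors,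
    ← sum_sub_distrib, mul_sum]
  refine sum_congr rfl fun r hr => ?_
  have hr0 : (r : K) ≠ 0 := by exact_mod_cast (Nat.pos_of_mem_divisors hr).ne'
  simp [pow_apply, Nat.cast_div (Nat.dvd_of_mem_divisors hr) hr0]
  field_simp

end ArithmeticFunction

namespace Alpha1

def sols (m : ℕ) : Finset (ℕ × ℕ × ℕ × ℕ) :=
  (quadBox m).filter fun p => p.1 * p.2.1 + p.2.2.1 * p.2.2.2 = m

lemma mem_sols {m a x b y : ℕ} :
    (a, x, b, y) ∈ sols m ↔ 0 < a ∧ 0 < x ∧ 0 < b ∧ 0 < y ∧ a * x + b * y = m := by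
  simp only [sols, quadBox, mem_filter, mem_product, mem_Ioc]
  constructor
  · rintro ⟨⟨⟨ha, -⟩, ⟨hx, -⟩, ⟨hb, -⟩, ⟨hy, -⟩⟩, h⟩
    exact ⟨ha, hx, hb, hy, h⟩
  · rintro ⟨ha, hx, hb, hy, h⟩
    have := Nat.le_mul_of_pos_left x ha
    have := Nat.le_mul_of_pos_right a hx
    have := Nat.le_mul_of_pos_left y hb
    have := Nat.le_mul_of_pos_right b hy
    omega

def oddSols (m : ℕ) : Finset (ℕ × ℕ × ℕ × ℕ) :=
  (sols m).filter fun p => Odd p.1 ∧ Odd p.2.2.1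

def mixedSols (m : ℕ) : Finset (ℕ × ℕ × ℕ × ℕ) :=
  (sols m).filter fun p => Even p.1 ∧ Odd p.2.2.1

@[simp]
lemma mem_oddSols {m a x b y : ℕ} :
    (a, x, b, y) ∈ oddSols m ↔
      0 < a ∧ 0 < x ∧ 0 < b ∧ 0 < y ∧ a % 2 = 1 ∧ b % 2 = 1 ∧ a * x + b * y = m := by
  simp only [oddSols, mem_filter, mem_sols, Nat.odd_iff]
  tauto

@[simp]
lemma mem_mixedSols {m a x b y : ℕ} :
    (a, x, b, y) ∈ mixedSols m ↔
      0 < a ∧ 0 < x ∧ 0 < b ∧ 0 < y ∧ a % 2 = 0 ∧ b % 2 = 1 ∧ a * x + b * y = m := by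
  simp only [mixedSols, mem_filter, mem_sols, Nat.odd_iff, Nat.even_iff]
  tauto

def alpha (m : ℕ) : ℕ :=
  ∑ p ∈ (oddSols m).filter (fun p => p.2.1 < p.2.2.2), p.2.1 * p.2.2.2

lemma alpha1_eq_sum_oddSols (m : ℕ) :
    alpha1 m = ∑ p ∈ (oddSols m).filter (fun p => Nat.gcd p.1 p.2.2.1 = 1 ∧ p.2.1 < p.2.2.2),
      p.2.1 * p.2.2.2 := by
  rw [alpha1, oddSols, sols, filter_filter, filter_filter]
  exact sum_congr (filter_congr fun _ _ => by tauto) fun _ _ => rfl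

lemma sum_divisors_alpha1 {m : ℕ} (hm : Odd m) : ∑ d ∈ m.divisors, alpha1 d = alpha m := by
  rw [← Nat.sum_div_divisors, alpha]
  simp_rw [alpha1_eq_sum_oddSols]
  rw [sum_sigma']
  refine sum_nbij' (fun q => (q.1 * q.2.1, q.2.2.1, q.1 * q.2.2.2.1, q.2.2.2.2))
    (fun p => ⟨Nat.gcd p.1 p.2.2.1,
      (p.1 / Nat.gcd p.1 p.2.2.1, p.2.1, p.2.2.1 / Nat.gcd p.1 p.2.2.1, p.2.2.2)⟩)
    ?_ ?_ ?_ ?_ fun _ _ => rfl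
  · rintro ⟨d, a, x, b, y⟩ hq
    simp only [mem_sigma, Nat.mem_divisors, mem_filter, mem_oddSols] at hq ⊢
    obtain ⟨⟨hdm, -⟩, ⟨ha, hx, hb, hy, ha2, hb2, h⟩, -, hxy⟩ := hq
    have hd2 : d % 2 = 1 := Nat.odd_iff.mp (hm.of_dvd_nat hdm)
    refine ⟨⟨Nat.mul_pos (Nat.pos_of_dvd_of_pos hdm hm.pos) ha, hx,
      Nat.mul_pos (Nat.pos_of_dvd_of_pos hdm hm.pos) hb, hy, ?_, ?_, ?_⟩, hxy⟩
    · simp [Nat.mul_mod, hd2, ha2]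
    · simp [Nat.mul_mod, hd2, hb2]
    · rw [mul_assoc, mul_assoc, ← mul_add, h, Nat.mul_div_cancel' hdm]
  · rintro ⟨a, x, b, y⟩ hp
    simp only [mem_filter, mem_oddSols] at hp
    obtain ⟨⟨ha, hx, hb, hy, ha2, hb2, h⟩, hxy⟩ := hp
    set g := Nat.gcd a b
    have hg : 0 < g := Nat.gcd_pos_of_pos_left b ha
    have hga : g * (a / g) = a := Nat.mul_div_cancel' (Nat.gcd_dvd_left a b)
    have hgb : g * (b / g) = b := Nat.mul_div_cancel' (Nat.gcd_dvd_right a b)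
    have hmg : m = g * (a / g * x + b / g * y) :=
      calc m = g * (a / g) * x + g * (b / g) * y := by rw [hga, hgb, h]
        _ = g * (a / g * x + b / g * y) := by ring
    simp only [mem_sigma, Nat.mem_divisors, mem_filter, mem_oddSols]
    refine ⟨⟨Dvd.intro _ hmg.symm, hm.pos.ne'⟩, ⟨?_, hx, ?_, hy, ?_, ?_, ?_⟩,
      Nat.coprime_div_gcd_div_gcd hg, hxy⟩
    · exact Nat.div_pos (Nat.le_of_dvd ha (Nat.gcd_dvd_left a b)) hg
    · exact Nat.div_pos (Nat.le_of_dvd hb (Nat.gcd_dvd_right a b)) hg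
    · exact Nat.odd_iff.mp ((Nat.odd_iff.mpr ha2).of_dvd_nat
        (Nat.div_dvd_of_dvd (Nat.gcd_dvd_left a b)))
    · exact Nat.odd_iff.mp ((Nat.odd_iff.mpr hb2).of_dvd_nat
        (Nat.div_dvd_of_dvd (Nat.gcd_dvd_right a b)))
    · exact (Nat.div_eq_of_eq_mul_right hg hmg).symm
  · rintro ⟨d, a, x, b, y⟩ hq
    simp only [mem_sigma, Nat.mem_divisors, mem_filter, mem_oddSols] at hq
    obtain ⟨⟨hdm, -⟩, ⟨ha, -, hb, -⟩, hab, -⟩ := hq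
    have hd : 0 < d := Nat.pos_of_dvd_of_pos hdm hm.pos
    simp [Nat.gcd_mul_left, hab, Nat.mul_div_cancel_left _ hd]
  · rintro ⟨a, x, b, y⟩ -
    simp [Nat.mul_div_cancel' (Nat.gcd_dvd_left a b), Nat.mul_div_cancel' (Nat.gcd_dvd_right a b)]

def swapTerms (p : ℕ × ℕ × ℕ × ℕ) : ℕ × ℕ × ℕ × ℕ := (p.2.2.1, p.2.2.2, p.1, p.2.1)

lemma swapTerms_mem_oddSols {m : ℕ} {p : ℕ × ℕ × ℕ × ℕ} (hp : p ∈ oddSols m) :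
    swapTerms p ∈ oddSols m := by
  obtain ⟨a, x, b, y⟩ := p
  simp only [swapTerms, mem_oddSols] at hp ⊢
  obtain ⟨ha, hx, hb, hy, ha2, hb2, h⟩ := hp
  exact ⟨hb, hy, ha, hx, hb2, ha2, by rw [← h, add_comm]⟩

lemma sum_oddSols_of_swapTerms {m : ℕ} {f : ℕ × ℕ × ℕ × ℕ → ℤ}
    (hf : ∀ p, f (swapTerms p) = f p) {g h : ℕ × ℕ × ℕ × ℕ → ℕ}
    (hgh : ∀ p, g (swapTerms p) = h p) :
    ∑ p ∈ oddSols m, f p = 2 * ∑ p ∈ (oddSols m).filter (fun p => h p < g p), f p +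
      ∑ p ∈ (oddSols m).filter (fun p => g p = h p), f p := by
  have hhg : ∀ p, h (swapTerms p) = g p := fun p => (hgh (swapTerms p)).symm
  have hswap : ∑ p ∈ (oddSols m).filter (fun p => g p < h p), f p =
      ∑ p ∈ (oddSols m).filter (fun p => h p < g p), f p := by
    refine sum_nbij' swapTerms swapTerms ?_ ?_ (fun _ _ => rfl) (fun _ _ => rfl)
      fun p _ => (hf p).symm
    all_goals
      intro p hp
      rw [mem_filter] at hp ⊢
      exact ⟨swapTerms_mem_oddSols hp.1, by rw [hgh, hhg]; exact hp.2⟩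
  rw [sum_eq_sum_filter_lt_add_sum_filter_eq_add_sum_filter_gt _ g h, hswap]
  ring

lemma sum_oddSols_mul {m : ℕ} (hm : Odd m) :
    ∑ p ∈ oddSols m, (p.2.1 * p.2.2.2 : ℤ) = 2 * alpha m := by
  rw [sum_oddSols_of_swapTerms (g := fun p => p.2.2.2) (h := fun p => p.2.1)
    (fun p => mul_comm _ _) fun p => rfl, alpha]
  have hdiag : (oddSols m).filter (fun p => p.2.2.2 = p.2.1) = ∅ := by
    refine filter_false_of_mem ?_
    rintro ⟨a, x, b, y⟩ hp (hyx : y = x)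
    subst hyx
    simp only [mem_oddSols] at hp
    obtain ⟨-, -, -, -, ha2, hb2, h⟩ := hp
    have : (a + b) * y % 2 = 0 := by simp [Nat.mul_mod, Nat.add_mod, ha2, hb2]
    have hm2 := Nat.odd_iff.mp hm
    rw [add_mul, h] at this
    omega
  rw [hdiag, sum_empty]
  push_cast
  ring

lemma sum_oddSols_lt_sub_sq (m : ℕ) :
    ∑ p ∈ (oddSols m).filter (fun p => p.2.2.2 < p.2.1), ((p.2.1 : ℤ) - p.2.2.2) ^ 2 =
      ∑ p ∈ (mixedSols m).filter (fun p => p.2.2.1 < p.1), (p.2.2.2 : ℤ) ^ 2 := by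
  refine sum_nbij' (fun p => (p.1 + p.2.2.1, p.2.2.2, p.1, p.2.1 - p.2.2.2))
    (fun p => (p.2.2.1, p.2.1 + p.2.2.2, p.1 - p.2.2.1, p.2.1)) ?_ ?_ ?_ ?_ ?_ <;>
  rintro ⟨a, x, b, y⟩ hp <;>
  simp only [mem_filter, mem_oddSols, mem_mixedSols, Prod.mk.injEq, true_and, and_true] at hp ⊢
  · obtain ⟨⟨ha, hx, hb, hy, ha2, hb2, h⟩, hyx⟩ := hp
    refine ⟨⟨by omega, hy, ha, by omega, by omega, ha2, ?_⟩, by omega⟩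
    zify [hyx.le] at h ⊢
    linear_combination h
  · obtain ⟨⟨ha, hx, hb, hy, ha2, hb2, h⟩, hba⟩ := hp
    refine ⟨⟨hb, by omega, by omega, hx, hb2, by omega, ?_⟩, by omega⟩
    zify [hba.le] at h ⊢
    linear_combination h
  · omega
  · omega
  · push_cast [hp.2.le]
    rfl

lemma sum_oddSols_diag_add_sq {m : ℕ} (hm : Odd m) :
    ∑ p ∈ (oddSols m).filter (fun p => p.1 = p.2.2.1), ((p.2.1 : ℤ) + p.2.2.2) ^ 2 =
      ∑ c ∈ m.divisors, ((c - 1 : ℕ) : ℤ) * (c : ℤ) ^ 2 := by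
  have hcount : ∀ c : ℕ, ((c - 1 : ℕ) : ℤ) * (c : ℤ) ^ 2 = ∑ _x ∈ Ioo 0 c, (c : ℤ) ^ 2 := by
    simp
  simp_rw [hcount]
  rw [sum_sigma']
  refine sum_nbij' (fun p => ⟨p.2.1 + p.2.2.2, p.2.1⟩) (fun q => (m / q.1, q.2, m / q.1, q.1 - q.2))
    ?_ ?_ ?_ ?_ ?_
  · rintro ⟨a, x, b, y⟩ hp
    simp only [mem_filter, mem_oddSols] at hp
    obtain ⟨⟨ha, hx, hb, hy, ha2, hb2, h⟩, rfl⟩ := hp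
    simp only [mem_sigma, Nat.mem_divisors, mem_Ioo]
    exact ⟨⟨Dvd.intro_left a (by rw [← h]; ring), hm.pos.ne'⟩, hx, by omega⟩
  · rintro ⟨c, x⟩ hq
    simp only [mem_sigma, Nat.mem_divisors, mem_Ioo] at hq
    obtain ⟨⟨hcm, -⟩, hx, hxc⟩ := hq
    have hk : m / c * c = m := Nat.div_mul_cancel hcm
    have hk0 : 0 < m / c := Nat.div_pos (Nat.le_of_dvd hm.pos hcm) (by omega)
    have hk2 := Nat.odd_iff.mp (hm.of_dvd_nat (Nat.div_dvd_of_dvd hcm))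
    simp only [mem_filter, mem_oddSols]
    refine ⟨⟨hk0, hx, hk0, by omega, hk2, hk2, ?_⟩, trivial⟩
    rw [← mul_add, Nat.add_sub_cancel' hxc.le, hk]
  · rintro ⟨a, x, b, y⟩ hp
    simp only [mem_filter, mem_oddSols] at hp
    obtain ⟨⟨ha, hx, hb, hy, ha2, hb2, h⟩, rfl⟩ := hp
    have : m / (x + y) = a := Nat.div_eq_of_eq_mul_right (by omega) (by rw [← h]; ring)
    simp only [this, Prod.mk.injEq, true_and]
    omega
  · rintro ⟨c, x⟩ hq
    simp only [mem_sigma, mem_Ioo] at hq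
    simp only [Nat.add_sub_cancel' hq.2.2.le]
  · rintro ⟨a, x, b, y⟩ -
    push_cast
    rfl

lemma sum_oddSols_lt_add_sq (m : ℕ) :
    ∑ p ∈ (oddSols m).filter (fun p => p.2.2.1 < p.1), ((p.2.1 : ℤ) + p.2.2.2) ^ 2 =
      ∑ p ∈ (mixedSols m).filter (fun p => p.2.1 < p.2.2.2), (p.2.2.2 : ℤ) ^ 2 := by
  refine sum_nbij' (fun p => (p.1 - p.2.2.1, p.2.1, p.2.2.1, p.2.1 + p.2.2.2))
    (fun p => (p.1 + p.2.2.1, p.2.1, p.2.2.1, p.2.2.2 - p.2.1)) ?_ ?_ ?_ ?_ ?_ <;>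
  rintro ⟨a, x, b, y⟩ hp <;>
  simp only [mem_filter, mem_oddSols, mem_mixedSols, Prod.mk.injEq, true_and] at hp ⊢
  · obtain ⟨⟨ha, hx, hb, hy, ha2, hb2, h⟩, hba⟩ := hp
    refine ⟨⟨by omega, hx, hb, by omega, by omega, hb2, ?_⟩, by omega⟩
    zify [hba.le] at h ⊢
    linear_combination h
  · obtain ⟨⟨ha, hx, hb, hy, ha2, hb2, h⟩, hxy⟩ := hp
    refine ⟨⟨by omega, hx, hb, by omega, by omega, hb2, ?_⟩, by omega⟩
    zify [hxy.le] at h ⊢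
    linear_combination h
  · omega
  · omega
  · push_cast
    rfl

lemma sum_mixedSols_lt (m : ℕ) :
    ∑ p ∈ (mixedSols m).filter (fun p => p.1 < p.2.2.1), (p.2.2.2 : ℤ) ^ 2 =
      ∑ p ∈ (mixedSols m).filter (fun p => p.2.2.2 < p.2.1), (p.2.2.2 : ℤ) ^ 2 := by
  refine sum_nbij' (fun p => (p.1, p.2.1 + p.2.2.2, p.2.2.1 - p.1, p.2.2.2))
    (fun p => (p.1, p.2.1 - p.2.2.2, p.2.2.1 + p.1, p.2.2.2)) ?_ ?_ ?_ ?_ fun _ _ => rfl <;>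
  rintro ⟨a, x, b, y⟩ hp <;>
  simp only [mem_filter, mem_mixedSols, Prod.mk.injEq, true_and, and_true] at hp ⊢
  · obtain ⟨⟨ha, hx, hb, hy, ha2, hb2, h⟩, hab⟩ := hp
    refine ⟨⟨ha, by omega, by omega, hy, ha2, by omega, ?_⟩, by omega⟩
    zify [hab.le] at h ⊢
    linear_combination h
  · obtain ⟨⟨ha, hx, hb, hy, ha2, hb2, h⟩, hyx⟩ := hp
    refine ⟨⟨ha, by omega, by omega, hy, ha2, by omega, ?_⟩, by omega⟩
    zify [hyx.le] at h ⊢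
    linear_combination h
  · omega
  · omega

lemma sum_mixedSols_diag {m : ℕ} (hm : Odd m) :
    ∑ p ∈ (mixedSols m).filter (fun p => p.2.1 = p.2.2.2), (p.2.2.2 : ℤ) ^ 2 =
      ∑ c ∈ m.divisors, ((m / c / 2 : ℕ) : ℤ) * (c : ℤ) ^ 2 := by
  have hcount : ∀ c : ℕ, ((m / c / 2 : ℕ) : ℤ) * (c : ℤ) ^ 2 =
      ∑ _j ∈ Ioc 0 (m / c / 2), (c : ℤ) ^ 2 := by
    simp
  simp_rw [hcount]
  rw [sum_sigma']
  refine sum_nbij' (fun p => ⟨p.2.2.2, p.1 / 2⟩) (fun q => (2 * q.2, q.1, m / q.1 - 2 * q.2, q.1))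
    ?_ ?_ ?_ ?_ fun _ _ => rfl
  · rintro ⟨a, x, b, y⟩ hp
    simp only [mem_filter, mem_mixedSols] at hp
    obtain ⟨⟨ha, hx, hb, hy, ha2, hb2, h⟩, rfl⟩ := hp
    have hk : m / x = a + b := Nat.div_eq_of_eq_mul_left hx (by rw [← h]; ring)
    simp only [mem_sigma, Nat.mem_divisors, mem_Ioc, hk]
    exact ⟨⟨Dvd.intro_left (a + b) (by rw [← h]; ring), hm.pos.ne'⟩, by omega, by omega⟩
  · rintro ⟨c, j⟩ hq
    simp only [mem_sigma, Nat.mem_divisors, mem_Ioc] at hq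
    obtain ⟨⟨hcm, -⟩, hj, hjk⟩ := hq
    have hc : 0 < c := Nat.pos_of_dvd_of_pos hcm hm.pos
    have hk : m / c * c = m := Nat.div_mul_cancel hcm
    have hk2 := Nat.odd_iff.mp (hm.of_dvd_nat (Nat.div_dvd_of_dvd hcm))
    simp only [mem_filter, mem_mixedSols]
    refine ⟨⟨by omega, hc, by omega, hc, by omega, by omega, ?_⟩, trivial⟩
    rw [← add_mul, Nat.add_sub_cancel' (by omega), hk]
  · rintro ⟨a, x, b, y⟩ hp
    simp only [mem_filter, mem_mixedSols] at hp
    obtain ⟨⟨ha, hx, hb, hy, ha2, hb2, h⟩, rfl⟩ := hp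
    have hk : m / x = a + b := Nat.div_eq_of_eq_mul_left hx (by rw [← h]; ring)
    simp only [hk, Prod.mk.injEq, true_and, and_true]
    omega
  · rintro ⟨c, j⟩ -
    simp

lemma sum_mixedSols_gt {m : ℕ} (hm : Odd m) :
    ∑ p ∈ (mixedSols m).filter (fun p => p.2.2.1 < p.1), (p.2.2.2 : ℤ) ^ 2 =
      ∑ p ∈ (mixedSols m).filter (fun p => p.2.1 < p.2.2.2), (p.2.2.2 : ℤ) ^ 2 +
        ∑ c ∈ m.divisors, ((m / c / 2 : ℕ) : ℤ) * (c : ℤ) ^ 2 := by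
  have hparity := sum_eq_sum_filter_lt_add_sum_filter_eq_add_sum_filter_gt (mixedSols m)
    (fun p => p.1) (fun p => p.2.2.1) (fun p => (p.2.2.2 : ℤ) ^ 2)
  have hsize := sum_eq_sum_filter_lt_add_sum_filter_eq_add_sum_filter_gt (mixedSols m)
    (fun p => p.2.1) (fun p => p.2.2.2) (fun p => (p.2.2.2 : ℤ) ^ 2)
  have hdiag : (mixedSols m).filter (fun p => p.1 = p.2.2.1) = ∅ := by
    refine filter_false_of_mem ?_
    rintro ⟨a, x, b, y⟩ hp (hab : a = b)
    simp only [mem_mixedSols] at hp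
    omega
  rw [hdiag, sum_empty, add_zero, sum_mixedSols_lt] at hparity
  rw [sum_mixedSols_diag hm] at hsize
  linarith

lemma eight_mul_alpha_eq_sum_divisors {m : ℕ} (hm : Odd m) :
    8 * (alpha m : ℤ) = ∑ c ∈ m.divisors, ((c - 1 : ℕ) : ℤ) * (c : ℤ) ^ 2 -
      2 * ∑ c ∈ m.divisors, ((m / c / 2 : ℕ) : ℤ) * (c : ℤ) ^ 2 := by
  have hsub := sum_oddSols_of_swapTerms (m := m) (f := fun p => ((p.2.1 : ℤ) - p.2.2.2) ^ 2)
    (fun p => by simp only [swapTerms]; ring) (g := fun p => p.2.1) (h := fun p => p.2.2.2)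
    fun p => rfl
  have hadd := sum_oddSols_of_swapTerms (m := m) (f := fun p => ((p.2.1 : ℤ) + p.2.2.2) ^ 2)
    (fun p => by simp only [swapTerms]; ring) (g := fun p => p.1) (h := fun p => p.2.2.1)
    fun p => rfl
  have hdiag : ∑ p ∈ (oddSols m).filter (fun p => p.2.1 = p.2.2.2),
      ((p.2.1 : ℤ) - p.2.2.2) ^ 2 = 0 :=
    sum_eq_zero fun p hp => by rw [(mem_filter.mp hp).2, sub_self, zero_pow two_ne_zero]
  rw [sum_oddSols_lt_sub_sq, sum_mixedSols_gt hm, hdiag] at hsub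
  rw [sum_oddSols_lt_add_sq, sum_oddSols_diag_add_sq hm] at hadd
  have h4 : ∑ p ∈ oddSols m, 4 * ((p.2.1 : ℤ) * p.2.2.2) =
      ∑ p ∈ oddSols m, ((p.2.1 : ℤ) + p.2.2.2) ^ 2 -
        ∑ p ∈ oddSols m, ((p.2.1 : ℤ) - p.2.2.2) ^ 2 := by
    rw [← sum_sub_distrib]
    exact sum_congr rfl fun p _ => by ring
  rw [← mul_sum, sum_oddSols_mul hm, hadd, hsub] at h4
  linarith

theorem eight_mul_alpha {m : ℕ} (hm : Odd m) :
    8 * (alpha m : ℤ) = σ 3 m - m * σ 1 m := by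
  rw [eight_mul_alpha_eq_sum_divisors hm, sigma_apply, sigma_one_apply, Nat.cast_sum,
    Nat.cast_sum, mul_sum, mul_sum, ← sum_sub_distrib, ← sum_sub_distrib]
  refine sum_congr rfl fun c hc => ?_
  have hc0 : 0 < c := Nat.pos_of_mem_divisors hc
  obtain ⟨k, rfl⟩ := Nat.dvd_of_mem_divisors hc
  obtain ⟨j, rfl⟩ := hm.of_dvd_nat (Dvd.intro_left c rfl)
  rw [Nat.mul_div_cancel_left _ hc0, show (2 * j + 1) / 2 = j by omega]
  push_cast [Nat.cast_sub hc0]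
  ring

def alpha1Fn : ArithmeticFunction ℕ := ⟨alpha1, by simp [alpha1, quadBox]⟩

@[simp]
lemma alpha1Fn_apply (m : ℕ) : alpha1Fn m = alpha1 m := rfl

lemma eight_smul_zeta_mul_alpha1Fn_apply {m : ℕ} (hm : Odd m) :
    ((8 : ℚ) • (ζ * alpha1Fn : ArithmeticFunction ℚ)) m =
      (↑(σ 3) - ↑((ArithmeticFunction.id : ArithmeticFunction ℕ).pmul (σ 1)) :
        ArithmeticFunction ℚ) m := by
  have h := congrArg (Int.cast : ℤ → ℚ) (eight_mul_alpha hm)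
  rw [← sum_divisors_alpha1 hm] at h
  simp only [smul_map, coe_zeta_mul_apply, ArithmeticFunction.sub_apply, natCoe_apply,
    pmul_apply, id_apply, alpha1Fn_apply, smul_eq_mul]
  push_cast at h ⊢
  exact h

lemma eight_mul_id_pmul_moebius_mul_alpha1Fn_apply {n : ℕ} (hn : Odd n) :
    8 * ((ArithmeticFunction.id : ArithmeticFunction ℚ).pmul μ * alpha1Fn) n =
      ((ArithmeticFunction.id : ArithmeticFunction ℚ).pmul μ * ↑(pow 3) - μ * ↑(pow 2)) n := by
  set ν : ArithmeticFunction ℚ := (ArithmeticFunction.id : ArithmeticFunction ℚ).pmul μ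
  have hζ : ν * alpha1Fn = ν * μ * (ζ * alpha1Fn) := by
    rw [mul_assoc ν, ← mul_assoc (μ : ArithmeticFunction ℚ), coe_moebius_mul_coe_zeta, one_mul]
  rw [hζ, ← smul_eq_mul, ← smul_map, ← mul_smul_comm, ← id_pmul_moebius_mul_moebius_mul_sigma_sub]
  exact mul_apply_congr_right fun d hd =>
    eight_smul_zeta_mul_alpha1Fn_apply (hn.of_dvd_nat (Nat.dvd_of_mem_divisors hd))

end Alpha1

theorem stmt9_general (n : ℕ) (hodd : Odd n) :
    ∑ r ∈ n.divisors,
        (r : ℚ) * (ArithmeticFunction.moebius r : ℚ) * (alpha1 (n / r) : ℚ) =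
      ((n : ℚ) ^ 2 * ((n : ℚ) - 1)) / 8 *
        ∑ r ∈ n.divisors, (ArithmeticFunction.moebius r : ℚ) / (r : ℚ) ^ 2 := by
  have hconv : ∑ r ∈ n.divisors, (r : ℚ) * (μ r : ℚ) * (alpha1 (n / r) : ℚ) =
      ((ArithmeticFunction.id : ArithmeticFunction ℚ).pmul μ * Alpha1.alpha1Fn) n := by
    rw [mul_apply_eq_sum_divisors]
    simp
  have key := Alpha1.eight_mul_id_pmul_moebius_mul_alpha1Fn_apply hodd
  rw [id_pmul_moebius_mul_pow_sub_apply, ← hconv] at key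
  linarith

theorem stmt9 (n : ℕ) (hn : 1 ≤ n) (hodd : Odd n) :
    ∑ r ∈ n.divisors,
        (r : ℚ) * (ArithmeticFunction.moebius r : ℚ) * (alpha1 (n / r) : ℚ) =
      ((n : ℚ) ^ 2 * ((n : ℚ) - 1)) / 8 *
        ∑ r ∈ n.divisors, (ArithmeticFunction.moebius r : ℚ) / (r : ℚ) ^ 2 :=
  stmt9_general n hodd
end
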